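/- arXiv:2105.10794 — 2 statements merged into one kernel-verified Lean document; each statement's English description precedes it below -/
import Mathlib

section
/- For a pool mix with residual pool size ω and throughput Ω per round, where at each round Ω messages are output chosen uniformly at random from the ω+Ω messages in the pool, the limiting sender-anonymity entropy as the number of rounds tends to infinity equals (1 + ω/Ω)·log(ω+Ω) − (ω/Ω)·log ω. -/
open Real

/-- Serjantov–Danezis limiting entropy of a pool mix with residual pool size `ω`
and throughput `Ω` per round.  With `q = ω/(ω+Ω)`, the message-delay distribution is
`p_k = (1−q)q^{k−1}` for `k ≥ 1`.  Its Shannon entropy equals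
`−log(1−q) − (q/(1−q))·log q`, and adding the per-round batch-size term `log Ω`
yields the limiting sender-anonymity entropy `(1 + ω/Ω)·log(ω+Ω) − (ω/Ω)·log ω`. -/
theorem pool_mix_limiting_entropy (ω Ω : ℝ) (hω : 0 < ω) (hΩ : 0 < Ω)
    (q : ℝ) (hq : q = ω / (ω + Ω)) :
    (-∑' k : ℕ, ((1 - q) * q ^ k) * Real.logb 2 ((1 - q) * q ^ k)) =
        -Real.logb 2 (1 - q) - (q / (1 - q)) * Real.logb 2 q ∧
    (-Real.logb 2 (1 - q) - (q / (1 - q)) * Real.logb 2 q) + Real.logb 2 Ω =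
        (1 + ω / Ω) * Real.logb 2 (ω + Ω) - (ω / Ω) * Real.logb 2 ω := by
  have hsum : 0 < ω + Ω := by linarith
  have hq0 : 0 < q := by rw [hq]; positivity
  have hq1 : q < 1 := by
    rw [hq, div_lt_one hsum]; linarith
  have h1q : 0 < 1 - q := by linarith
  constructor
  · have hnorm : ‖q‖ < 1 := by rw [Real.norm_eq_abs, abs_of_pos hq0]; exact hq1
    have hgeo : Summable (fun k : ℕ => q ^ k) := summable_geometric_of_lt_one hq0.le hq1
    have hkgeo : Summable (fun k : ℕ => (k : ℝ) * q ^ k) :=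
      (hasSum_coe_mul_geometric_of_norm_lt_one hnorm).summable
    have hcongr : ∀ k : ℕ, ((1 - q) * q ^ k) * Real.logb 2 ((1 - q) * q ^ k)
        = ((1 - q) * Real.logb 2 (1 - q)) * q ^ k
          + ((1 - q) * Real.logb 2 q) * ((k : ℝ) * q ^ k) := by
      intro k
      have hpos : (0 : ℝ) < q ^ k := pow_pos hq0 k
      rw [Real.logb_mul h1q.ne' hpos.ne', Real.logb_pow]
      ring
    rw [tsum_congr hcongr, Summable.tsum_add (hgeo.mul_left _) (hkgeo.mul_left _),
      tsum_mul_left, tsum_mul_left, tsum_geometric_of_lt_one hq0.le hq1,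
      tsum_coe_mul_geometric_of_norm_lt_one hnorm]
    field_simp
    ring
  · have hlq : Real.logb 2 q = Real.logb 2 ω - Real.logb 2 (ω + Ω) := by
      rw [hq, Real.logb_div hω.ne' hsum.ne']
    have h1qe : 1 - q = Ω / (ω + Ω) := by rw [hq]; field_simp; ring
    have hl1q : Real.logb 2 (1 - q) = Real.logb 2 Ω - Real.logb 2 (ω + Ω) := by
      rw [h1qe, Real.logb_div hΩ.ne' hsum.ne']
    have hratio : q / (1 - q) = ω / Ω := by
      rw [hq]; field_simp; rw [add_sub_cancel_left, div_self hΩ.ne']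
    rw [hlq, hl1q, hratio]
    ring
end

section
/- The extra entropy term log₂((λ+1)^{(λ+1)/2}/(2λ(λ−1)^{(λ−1)/2})) is strictly positive for every real λ > 1, i.e., the pool-mix version of AOT has a strictly larger effective anonymity set than AOT with the same parameters. -/
open Real

/-- The extra entropy term `log₂((λ+1)^{(λ+1)/2} / (2λ(λ−1)^{(λ−1)/2}))` is strictly
positive for every real `λ > 1`; equivalently, the pool-mix version of AOT has a
strictly larger effective anonymity set than AOT with the same parameters. -/
theorem extra_entropy_positive (lam : ℝ) (hlam : 1 < lam) :
    0 < Real.logb 2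
        ((lam + 1) ^ ((lam + 1) / 2) / (2 * lam * (lam - 1) ^ ((lam - 1) / 2))) := by
  have ht : (0:ℝ) < lam - 1 := by linarith
  set a : ℝ := (lam - 1) / 2 with ha
  have hapos : 0 < a := by positivity
  set s : ℝ := 2 / (lam - 1) with hs
  have hspos : 0 < s := by positivity
  have h1s : (0:ℝ) < 1 + s := by linarith
  -- Step 1 : exp (s/(1+s)) < 1 + s
  have h1 : Real.exp (s / (1 + s)) < 1 + s := by
    have hne : (1:ℝ) / (1 + s) ≠ 1 := by
      intro hcon
      have : (1:ℝ) = 1 + s := by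
        field_simp at hcon; linarith
      linarith
    have hlog : Real.log (1 / (1 + s)) < 1 / (1 + s) - 1 :=
      Real.log_lt_sub_one_of_pos (by positivity) hne
    rw [Real.log_div one_ne_zero (ne_of_gt h1s), Real.log_one] at hlog
    have heq : s / (1 + s) = 1 - 1 / (1 + s) := by field_simp; ring
    have hlt : s / (1 + s) < Real.log (1 + s) := by rw [heq]; linarith
    calc Real.exp (s / (1 + s)) < Real.exp (Real.log (1 + s)) :=
          Real.exp_lt_exp.mpr hlt
      _ = 1 + s := Real.exp_log h1s
  -- Step 2 : (1 + 1/(1+s))^s ≤ exp (s/(1+s))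
  have h2 : (1 + 1 / (1 + s)) ^ s ≤ Real.exp (s / (1 + s)) := by
    have hb : 1 + 1 / (1 + s) ≤ Real.exp (1 / (1 + s)) := by
      have := Real.add_one_le_exp (1 / (1 + s)); linarith
    calc (1 + 1 / (1 + s)) ^ s ≤ (Real.exp (1 / (1 + s))) ^ s :=
          Real.rpow_le_rpow (by positivity) hb hspos.le
      _ = Real.exp (1 / (1 + s) * s) := (Real.exp_mul _ _).symm
      _ = Real.exp (s / (1 + s)) := by ring_nf
  -- Step 3 : (2+s)^s < (1+s)^(s+1)
  have hC : (2 + s) ^ s < (1 + s) ^ (s + 1) := by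
    have hfact : (2:ℝ) + s = (1 + s) * (1 + 1 / (1 + s)) := by field_simp; ring
    rw [hfact, Real.mul_rpow h1s.le (by positivity)]
    calc (1 + s) ^ s * (1 + 1 / (1 + s)) ^ s
        ≤ (1 + s) ^ s * Real.exp (s / (1 + s)) := by
          exact mul_le_mul_of_nonneg_left h2 (Real.rpow_nonneg h1s.le s)
      _ < (1 + s) ^ s * (1 + s) := by
          exact mul_lt_mul_of_pos_left h1 (Real.rpow_pos_of_pos h1s s)
      _ = (1 + s) ^ (s + 1) := by
          rw [Real.rpow_add_one (ne_of_gt h1s)]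
  -- Step 4 : raise to power a ; note s * a = 1
  have hsa : s * a = 1 := by
    rw [hs, ha]; field_simp
  have hD : 2 + s < (1 + s) ^ (1 + a) := by
    have h := Real.rpow_lt_rpow (Real.rpow_nonneg (by linarith) s) hC hapos
    rw [← Real.rpow_mul (by linarith), ← Real.rpow_mul h1s.le, hsa,
        Real.rpow_one] at h
    have : (s + 1) * a = 1 + a := by rw [add_mul, hsa, one_mul]
    rwa [this] at h
  -- Step 5 : translate back to λ
  have h1seq : 1 + s = (lam + 1) / (lam - 1) := by
    rw [hs]; field_simp; ring
  have h2seq : 2 + s = 2 * lam / (lam - 1) := by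
    rw [hs]; field_simp; ring
  have hcore : 2 * lam < (lam + 1) ^ ((lam + 1) / 2) / (lam - 1) ^ a := by
    rw [h1seq, h2seq, Real.rpow_add (by positivity), Real.rpow_one,
        Real.div_rpow (by linarith) ht.le] at hD
    have hr : (lam - 1) ^ a > 0 := Real.rpow_pos_of_pos ht a
    have hrp : (lam + 1) ^ a > 0 := Real.rpow_pos_of_pos (by linarith) a
    rw [div_lt_iff₀ ht] at hD
    -- hD : 2 * lam < (lam+1)/(lam-1) * ((lam+1)^a / (lam-1)^a) * (lam-1)
    have key : (lam + 1) / (lam - 1) * ((lam + 1) ^ a / (lam - 1) ^ a) * (lam - 1)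
        = (lam + 1) ^ ((lam + 1) / 2) / (lam - 1) ^ a := by
      have : (lam + 1) ^ ((lam + 1) / 2) = (lam + 1) ^ a * (lam + 1) := by
        rw [← Real.rpow_add_one (by positivity : lam + 1 ≠ 0) a]
        congr 1
        rw [ha]; ring
      rw [this]; field_simp
    rwa [key] at hD
  have hDen : 0 < 2 * lam * (lam - 1) ^ ((lam - 1) / 2) := by
    have := Real.rpow_pos_of_pos ht ((lam - 1) / 2)
    positivity
  have hmain : 2 * lam * (lam - 1) ^ ((lam - 1) / 2) < (lam + 1) ^ ((lam + 1) / 2) := by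
    have hr : (0:ℝ) < (lam - 1) ^ a := Real.rpow_pos_of_pos ht a
    rw [lt_div_iff₀ hr] at hcore
    calc 2 * lam * (lam - 1) ^ ((lam - 1) / 2) = 2 * lam * (lam - 1) ^ a := by rw [ha]
      _ < (lam + 1) ^ ((lam + 1) / 2) := hcore
  exact Real.logb_pos one_lt_two ((one_lt_div hDen).mpr hmain)
end
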